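/- Let P₁ and P₂ be abstract polytopes of rank d ≥ 2, both in class 2_{{0, 1, …, d−2}} (combinatorially two-orbit and facet-intransitive). For k = 1, 2, fix a flag Φ_k of P_k and automorphisms γ^k_0, …, γ^k_{d−2}, γ^{k′} ∈ Γ(P_k) with γ^k_i(Φ_k) = Φ_k^i for i ≤ d−2 and γ^{k′}(Φ_k) = ((Φ_k^{d−1})^{d−2})^{d−1}. If there exists a group isomorphism f : Γ(P₁) → Γ(P₂) with f(γ^1_i) = γ^2_i for every i ∈ {0, …, d−2} and f(γ^{1′}) = γ^{2′}, then P₁ and P₂ are order-isomorphic. -/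

import Mathlib

/-! Generic definitions about flags, flag orbits, and abstract polytopes. -/

variable {α : Type*} [PartialOrder α]

/-- Two flags (maximal chains) are in the same orbit of the automorphism group
(the group of order automorphisms) if some order automorphism maps one onto the other. -/
def SameFlagOrbit (Φ Ψ : Flag α) : Prop :=
  ∃ γ : α ≃o α, γ '' (Φ : Set α) = (Ψ : Set α)

/-- The automorphism group has exactly two orbits on the flags. -/
def TwoFlagOrbits (α : Type*) [PartialOrder α] : Prop :=
  ∃ Φ Ψ : Flag α, ¬ SameFlagOrbit Φ Ψ ∧
    ∀ Ω : Flag α, SameFlagOrbit Ω Φ ∨ SameFlagOrbit Ω Ψ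

/-- `Ψ` is the flag `Φ^i`: it differs from `Φ` in exactly the rank-`i` element
(with respect to the rank function `rk`). -/
def IsIAdjacent (rk : α → ℤ) (i : ℤ) (Φ Ψ : Flag α) : Prop :=
  Φ ≠ Ψ ∧ ∀ x : α, rk x ≠ i → (x ∈ Φ ↔ x ∈ Ψ)

/-- A two-orbit polytope (with rank function `rk`, adjacency indices `0, …, n-1`)
is in class `2_I` if, for every flag `Φ` and every `i < n`, the `i`-adjacent flag `Φ^i`
lies in the same orbit as `Φ` exactly when `i ∈ I`. -/
def InClass (rk : α → ℤ) (n : ℕ) (I : Set ℕ) : Prop :=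
  TwoFlagOrbits α ∧
    ∀ (Φ Ψ : Flag α) (i : ℕ), i < n → IsIAdjacent rk i Φ Ψ →
      (SameFlagOrbit Φ Ψ ↔ i ∈ I)

/-- An abstract polytope of rank `d`: a bounded poset, graded by a rank function `rk`
taking values `-1, 0, …, d`, in which every flag (maximal chain) has exactly one element
of each rank, satisfying the diamond condition and strong flag-connectivity. -/
structure IsAbstractPolytope (α : Type*) [PartialOrder α] [BoundedOrder α]
    (rk : α → ℤ) (d : ℕ) : Prop where
  rk_bot : rk ⊥ = -1
  rk_top : rk ⊤ = d
  rk_strictMono : StrictMono rk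
  rk_cover : ∀ x y : α, x ⋖ y → rk y = rk x + 1
  flag_ranks : ∀ (Φ : Flag α) (i : ℤ), -1 ≤ i → i ≤ d → ∃! x, x ∈ Φ ∧ rk x = i
  diamond : ∀ x y : α, x < y → rk y = rk x + 2 →
    ∃ a b : α, a ≠ b ∧ ∀ z : α, (x < z ∧ z < y) ↔ (z = a ∨ z = b)
  connected : ∀ Φ Ψ : Flag α, ∃ (n : ℕ) (c : Fin (n + 1) → Flag α),
    c 0 = Φ ∧ c (Fin.last n) = Ψ ∧
    (∀ k : Fin n, ∃ i : ℤ, IsIAdjacent rk i (c k.castSucc) (c k.succ)) ∧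
    (∀ k, (Φ : Set α) ∩ (Ψ : Set α) ⊆ (c k : Set α))

/-!
The automorphism group acts freely on flags (by the diamond condition and flag-connectivity),
and in class `2_{{0,…,d-2}}` the flags `Φ` and `Λ = Φ^{d-1}` represent its two orbits. Hence
`γ • Φ₁ ↦ f γ • Φ₂`, `γ • Λ₁ ↦ f γ • Λ₂` is a bijection between the flags of the two polytopes.
It preserves `i`-adjacency: by equivariance this only has to be checked at `Φ` and `Λ`, whose
neighbours are `γ_i • Φ`, `Λ`, `γ_i • Λ` (for `i < d - 2`, because `γ_i` commutes with passing to
the `(d-1)`-adjacent flag), `γ' • Λ` and `Φ`, all matched by `f`. A bijection of flags preserving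
adjacency induces an isomorphism of polytopes: send `x` to the element of rank `rk x` in the image
of any flag through `x`; by strong flag-connectivity this does not depend on the flag.
-/

open MulAction Function

section FlagAction

variable {γ : α ≃o α} {Φ Ψ : Flag α} {x : α}

theorem Flag.mem_smul_iff : x ∈ γ • Φ ↔ γ⁻¹ x ∈ Φ := by
  rw [← SetLike.mem_coe, Flag.coe_smul, Set.mem_smul_set_iff_inv_smul_mem]
  rfl

theorem Flag.apply_mem_smul_iff : γ x ∈ γ • Φ ↔ x ∈ Φ := by
  rw [← SetLike.mem_coe, Flag.coe_smul]
  exact Set.smul_mem_smul_set_iff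

theorem Flag.smul_eq_iff_image_eq : γ • Φ = Ψ ↔ γ '' (Φ : Set α) = Ψ := by
  rw [← SetLike.coe_set_eq, Flag.coe_smul, ← Set.image_smul]
  rfl

theorem sameFlagOrbit_iff_orbit_eq :
    SameFlagOrbit Φ Ψ ↔ orbit (α ≃o α) Φ = orbit (α ≃o α) Ψ := by
  rw [eq_comm, orbit_eq_iff, mem_orbit_iff]
  exact exists_congr fun γ => Flag.smul_eq_iff_image_eq.symm

theorem TwoFlagOrbits.mem_orbit_or_mem_orbit (h : TwoFlagOrbits α) (hΦΨ : ¬ SameFlagOrbit Φ Ψ)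
    (Ξ : Flag α) : Ξ ∈ orbit (α ≃o α) Φ ∨ Ξ ∈ orbit (α ≃o α) Ψ := by
  obtain ⟨A, B, hAB, hcover⟩ := h
  simp only [sameFlagOrbit_iff_orbit_eq] at hAB hΦΨ hcover
  rw [← orbit_eq_iff, ← orbit_eq_iff]
  grind

end FlagAction

theorem exists_equivariant_equiv {G H X Y : Type*} [Group G] [Group H] [MulAction G X]
    [MulAction H Y] (f : G ≃* H) {x₁ y₁ : X} {x₂ y₂ : Y}
    (h₁ : Bijective (Sum.elim (· • x₁) (· • y₁) : G ⊕ G → X))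
    (h₂ : Bijective (Sum.elim (· • x₂) (· • y₂) : H ⊕ H → Y)) :
    ∃ T : X ≃ Y, (∀ (g : G) (x : X), T (g • x) = f g • T x) ∧ T x₁ = x₂ ∧ T y₁ = y₂ := by
  set e₁ := Equiv.ofBijective _ h₁
  set e₂ := Equiv.ofBijective _ h₂
  set T := e₁.symm.trans ((f.toEquiv.sumCongr f.toEquiv).trans e₂)
  have hT : ∀ s, T (e₁ s) = e₂ (Sum.map f f s) := fun s => by simp [T]
  have he₁ : ∀ (g : G) s, g • e₁ s = e₁ (Sum.map (g * ·) (g * ·) s) := by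
    rintro g (s | s) <;> simp [e₁, mul_smul]
  have he₂ : ∀ (h : H) s, h • e₂ s = e₂ (Sum.map (h * ·) (h * ·) s) := by
    rintro h (s | s) <;> simp [e₂, mul_smul]
  refine ⟨T, fun g x => ?_, by simpa [e₁, e₂] using hT (.inl 1),
    by simpa [e₁, e₂] using hT (.inr 1)⟩
  obtain ⟨s, rfl⟩ := e₁.surjective x
  rw [he₁, hT, hT, he₂]
  rcases s with s | s <;> simp

theorem symm_smul_of_equivariant {G H X Y : Type*} [Group G] [Group H] [MulAction G X]
    [MulAction H Y] {f : G ≃* H} {T : X ≃ Y} (hT : ∀ (g : G) (x : X), T (g • x) = f g • T x)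
    (h : H) (y : Y) : T.symm (h • y) = f.symm h • T.symm y :=
  T.injective (by rw [hT]; simp)

theorem IsIAdjacent.symm {rk : α → ℤ} {i : ℤ} {Φ Ψ : Flag α} (h : IsIAdjacent rk i Φ Ψ) :
    IsIAdjacent rk i Ψ Φ :=
  ⟨h.1.symm, fun x hx => (h.2 x hx).symm⟩

theorem InClass.not_sameFlagOrbit {rk : α → ℤ} {n i : ℕ} {I : Set ℕ} {Φ Ψ : Flag α}
    (hc : InClass rk n I) (hi : i < n) (hiI : i ∉ I) (h : IsIAdjacent rk i Φ Ψ) :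
    ¬ SameFlagOrbit Φ Ψ :=
  fun hs => hiI ((hc.2 Φ Ψ i hi h).1 hs)

section Polytope

variable [BoundedOrder α] {rk : α → ℤ} {d : ℕ} {i j m : ℤ} {Φ Ψ Ψ' Λ : Flag α} {x y : α}

namespace IsAbstractPolytope

theorem neg_one_le_rk (hP : IsAbstractPolytope α rk d) (x : α) : -1 ≤ rk x :=
  hP.rk_bot ▸ hP.rk_strictMono.monotone bot_le

theorem rk_le (hP : IsAbstractPolytope α rk d) (x : α) : rk x ≤ d :=
  hP.rk_top ▸ hP.rk_strictMono.monotone le_top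

theorem le_of_rk_le (hP : IsAbstractPolytope α rk d) (hx : x ∈ Φ) (hy : y ∈ Φ)
    (h : rk x ≤ rk y) : x ≤ y := by
  rcases Φ.le_or_le hx hy with hxy | hyx
  · exact hxy
  · rcases hyx.eq_or_lt with rfl | hlt
    · exact le_rfl
    · exact absurd (hP.rk_strictMono hlt) h.not_gt

theorem lt_of_rk_lt (hP : IsAbstractPolytope α rk d) (hx : x ∈ Φ) (hy : y ∈ Φ)
    (h : rk x < rk y) : x < y :=
  (hP.le_of_rk_le hx hy h.le).lt_of_ne (by rintro rfl; exact h.false)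

theorem eq_of_rk_eq (hP : IsAbstractPolytope α rk d) (hx : x ∈ Φ) (hy : y ∈ Φ)
    (h : rk x = rk y) : x = y :=
  (hP.le_of_rk_le hx hy h.le).antisymm (hP.le_of_rk_le hy hx h.ge)

theorem neg_one_lt_rk (hP : IsAbstractPolytope α rk d) (hx : x ≠ ⊥) : -1 < rk x :=
  hP.rk_bot ▸ hP.rk_strictMono (bot_lt_iff_ne_bot.2 hx)

theorem exists_covBy (hP : IsAbstractPolytope α rk d) (hx : x ≠ ⊥) : ∃ z, z ⋖ x := by
  obtain ⟨Φ, hxΦ⟩ := Flag.exists_mem x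
  obtain ⟨z, ⟨hzΦ, hz⟩, -⟩ :=
    hP.flag_ranks Φ (rk x - 1) (by linarith [hP.neg_one_lt_rk hx]) (by linarith [hP.rk_le x])
  refine ⟨z, hP.lt_of_rk_lt hzΦ hxΦ (by omega), fun w hzw hwx => ?_⟩
  linarith [hP.rk_strictMono hzw, hP.rk_strictMono hwx]

theorem rk_apply (hP : IsAbstractPolytope α rk d) (γ : α ≃o α) (x : α) : rk (γ x) = rk x := by
  obtain ⟨k, hk, hx⟩ : ∃ k, -1 ≤ k ∧ rk x = k := ⟨_, hP.neg_one_le_rk x, rfl⟩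
  induction k, hk using Int.leInduction generalizing x with
  | base =>
    obtain rfl : x = ⊥ := by
      by_contra hne
      linarith [hP.neg_one_lt_rk hne]
    rw [γ.map_bot]
  | succ k hk ih =>
    obtain ⟨z, hz⟩ := hP.exists_covBy (x := x) fun h => by subst h; linarith [hP.rk_bot]
    have hzk : rk z = k := by linarith [hP.rk_cover _ _ hz]
    rw [hP.rk_cover _ _ ((apply_covBy_apply_iff γ).2 hz), ih z hzk, hzk, hx]

theorem flag_eq_of_agree (hP : IsAbstractPolytope α rk d)
    (hagree : ∀ x, rk x ≠ i → (x ∈ Φ ↔ x ∈ Ψ)) (hyΦ : y ∈ Φ) (hyΨ : y ∈ Ψ) (hy : rk y = i) :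
    Φ = Ψ := by
  refine SetLike.ext fun x => ?_
  by_cases hx : rk x = i
  · constructor
    · intro hxΦ
      rwa [hP.eq_of_rk_eq hxΦ hyΦ (hx.trans hy.symm)]
    · intro hxΨ
      rwa [hP.eq_of_rk_eq hxΨ hyΨ (hx.trans hy.symm)]
  · exact hagree x hx

theorem eq_of_mem_Ioo (hP : IsAbstractPolytope α rk d) {w z z' : α} (hxy : rk y = rk x + 2)
    (hw : w ∈ Set.Ioo x y) (hz : z ∈ Set.Ioo x y) (hz' : z' ∈ Set.Ioo x y) (hwz : w ≠ z)
    (hwz' : w ≠ z') : z = z' := by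
  obtain ⟨a, b, -, hab⟩ := hP.diamond x y (hw.1.trans hw.2) hxy
  have := (hab w).1 hw
  have := (hab z).1 hz
  have := (hab z').1 hz'
  grind

theorem isIAdjacent_smul (hP : IsAbstractPolytope α rk d) (γ : α ≃o α)
    (h : IsIAdjacent rk i Φ Ψ) : IsIAdjacent rk i (γ • Φ) (γ • Ψ) :=
  ⟨fun he => h.1 (smul_left_cancel_iff γ |>.1 he), fun x hx => by
    simp only [Flag.mem_smul_iff]
    exact h.2 _ (by rwa [hP.rk_apply])⟩

end IsAbstractPolytope

namespace IsIAdjacent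

theorem ne_of_rk_eq (hP : IsAbstractPolytope α rk d) (h : IsIAdjacent rk i Φ Ψ) (hx : x ∈ Φ)
    (hy : y ∈ Ψ) (hxi : rk x = i) (hyi : rk y = i) : x ≠ y := by
  rintro rfl
  exact h.1 (hP.flag_eq_of_agree h.2 hx hy hxi)

theorem rk_ne (hP : IsAbstractPolytope α rk d) (h : IsIAdjacent rk i Φ Ψ) (hxΦ : x ∈ Φ)
    (hxΨ : x ∈ Ψ) : rk x ≠ i :=
  fun hx => h.ne_of_rk_eq hP hxΦ hxΨ hx hx rfl

theorem bounds (hP : IsAbstractPolytope α rk d) (h : IsIAdjacent rk i Φ Ψ) :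
    0 ≤ i ∧ i ≤ d - 1 := by
  obtain ⟨x, hx⟩ : ∃ x, rk x = i := by
    by_contra! hno
    exact h.1 (SetLike.ext fun x => h.2 x (hno x))
  have hbot := h.rk_ne hP Φ.bot_mem Ψ.bot_mem
  have htop := h.rk_ne hP Φ.top_mem Ψ.top_mem
  have := hP.neg_one_le_rk x
  have := hP.rk_le x
  rw [hP.rk_bot] at hbot
  rw [hP.rk_top] at htop
  omega

theorem unique (hP : IsAbstractPolytope α rk d) (h : IsIAdjacent rk i Φ Ψ)
    (h' : IsIAdjacent rk i Φ Ψ') : Ψ = Ψ' := by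
  obtain ⟨hi0, hid⟩ := h.bounds hP
  obtain ⟨u, ⟨huΦ, hu⟩, -⟩ := hP.flag_ranks Φ (i - 1) (by omega) (by omega)
  obtain ⟨v, ⟨hvΦ, hv⟩, -⟩ := hP.flag_ranks Φ (i + 1) (by omega) (by omega)
  obtain ⟨w, ⟨hwΦ, hw⟩, -⟩ := hP.flag_ranks Φ i (by omega) (by omega)
  obtain ⟨z, ⟨hzΨ, hz⟩, -⟩ := hP.flag_ranks Ψ i (by omega) (by omega)
  obtain ⟨z', ⟨hzΨ', hz'⟩, -⟩ := hP.flag_ranks Ψ' i (by omega) (by omega)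
  have hIoo : ∀ Ξ : Flag α, (∀ x, rk x ≠ i → (x ∈ Φ ↔ x ∈ Ξ)) →
      ∀ t ∈ Ξ, rk t = i → t ∈ Set.Ioo u v := fun Ξ hΞ t ht hti =>
    ⟨hP.lt_of_rk_lt ((hΞ u (by omega)).1 huΦ) ht (by omega),
      hP.lt_of_rk_lt ht ((hΞ v (by omega)).1 hvΦ) (by omega)⟩
  have hzz' : z = z' := hP.eq_of_mem_Ioo (by omega) (hIoo Φ (fun _ _ => Iff.rfl) w hwΦ hw)
    (hIoo Ψ h.2 z hzΨ hz) (hIoo Ψ' h'.2 z' hzΨ' hz')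
    (h.ne_of_rk_eq hP hwΦ hzΨ hw hz) (h'.ne_of_rk_eq hP hwΦ hzΨ' hw hz')
  exact hP.flag_eq_of_agree (fun x hx => (h.2 x hx).symm.trans (h'.2 x hx)) hzΨ
    (hzz' ▸ hzΨ') hz

end IsIAdjacent

namespace IsAbstractPolytope

theorem flag_induction (hP : IsAbstractPolytope α rk d) (p : Flag α → Prop) (h₀ : p Φ)
    (hstep : ∀ (i : ℤ) (Ξ Ξ' : Flag α), (Φ : Set α) ∩ Ψ ⊆ Ξ → (Φ : Set α) ∩ Ψ ⊆ Ξ' →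
      IsIAdjacent rk i Ξ Ξ' → p Ξ → p Ξ') : p Ψ := by
  obtain ⟨n, c, hc0, hcn, hadj, hsub⟩ := hP.connected Φ Ψ
  suffices ∀ k, p (c k) by simpa [hcn] using this (Fin.last n)
  intro k
  induction k using Fin.induction with
  | zero => rwa [hc0]
  | succ k ih =>
    obtain ⟨i, hi⟩ := hadj k
    exact hstep i _ _ (hsub _) (hsub _) hi ih

theorem eq_one_of_smul_eq (hP : IsAbstractPolytope α rk d) {γ : α ≃o α} (h : γ • Φ = Φ) :
    γ = 1 := by
  have hfix : ∀ Ξ : Flag α, γ • Ξ = Ξ := fun Ξ =>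
    hP.flag_induction (Φ := Φ) (fun Ξ => γ • Ξ = Ξ) h fun i Ξ Ξ' _ _ hadj hΞ =>
      (hΞ ▸ hP.isIAdjacent_smul γ hadj).unique hP hadj
  ext x
  obtain ⟨Ξ, hx⟩ := Flag.exists_mem x
  exact hP.eq_of_rk_eq (hfix Ξ ▸ Flag.apply_mem_smul_iff.2 hx) hx (hP.rk_apply γ x)

theorem smul_flag_injective (hP : IsAbstractPolytope α rk d) (Φ : Flag α) :
    Injective (· • Φ : (α ≃o α) → Flag α) := fun γ δ h => by
  have : (δ⁻¹ * γ) • Φ = Φ := by simp only [mul_smul, h, inv_smul_smul]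
  exact (inv_mul_eq_one.1 (hP.eq_one_of_smul_eq this)).symm

theorem apply_eq_of_isIAdjacent_smul (hP : IsAbstractPolytope α rk d) {σ : α ≃o α}
    (hσ : IsIAdjacent rk m Φ (σ • Φ)) (hx : x ∈ Φ) (hxm : rk x ≠ m) : σ x = x :=
  hP.eq_of_rk_eq (Flag.apply_mem_smul_iff.2 hx) ((hσ.2 x hxm).1 hx) (hP.rk_apply σ x)

theorem isIAdjacent_smul_of_apply_eq (hP : IsAbstractPolytope α rk d) {σ : α ≃o α}
    (hfix : ∀ x ∈ Λ, rk x ≠ m → σ x = x) (hσ : σ ≠ 1) : IsIAdjacent rk m Λ (σ • Λ) := by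
  refine ⟨fun h => hσ (hP.eq_one_of_smul_eq h.symm), fun x hx => ?_⟩
  obtain ⟨y, rfl⟩ := σ.surjective x
  rw [hP.rk_apply] at hx
  rw [Flag.apply_mem_smul_iff]
  constructor
  · intro hy
    rwa [← σ.injective (hfix _ hy (by rwa [hP.rk_apply]))]
  · intro hy
    rwa [hfix y hy hx]

theorem isIAdjacent_smul_of_two_le_abs_sub (hP : IsAbstractPolytope α rk d) {σ : α ≃o α}
    (hΛ : IsIAdjacent rk j Φ Λ) (hσ : IsIAdjacent rk m Φ (σ • Φ)) (hmj : 2 ≤ |m - j|) :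
    IsIAdjacent rk m Λ (σ • Λ) := by
  have hmj' := le_abs'.1 hmj
  obtain ⟨hj0, hjd⟩ := hΛ.bounds hP
  obtain ⟨u, ⟨huΦ, hu⟩, -⟩ := hP.flag_ranks Φ (j - 1) (by omega) (by omega)
  obtain ⟨v, ⟨hvΦ, hv⟩, -⟩ := hP.flag_ranks Φ (j + 1) (by omega) (by omega)
  obtain ⟨w, ⟨hwΦ, hw⟩, -⟩ := hP.flag_ranks Φ j (by omega) (by omega)
  obtain ⟨b, ⟨hbΛ, hb⟩, -⟩ := hP.flag_ranks Λ j (by omega) (by omega)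
  have hfix : ∀ x ∈ Φ, rk x ≠ m → σ x = x := fun x hx hxm =>
    hP.apply_eq_of_isIAdjacent_smul hσ hx hxm
  have hub : u < b := hP.lt_of_rk_lt ((hΛ.2 u (by omega)).1 huΦ) hbΛ (by omega)
  have hbv : b < v := hP.lt_of_rk_lt hbΛ ((hΛ.2 v (by omega)).1 hvΦ) (by omega)
  have hwb : w ≠ b := hΛ.ne_of_rk_eq hP hwΦ hbΛ hw hb
  -- `σ` fixes `u`, `v` and `w`, so it permutes the diamond `{w, b}` between `u` and `v`.
  have hσb : σ b = b := by
    refine hP.eq_of_mem_Ioo (x := u) (y := v) (w := w) (by omega)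
      ⟨hP.lt_of_rk_lt huΦ hwΦ (by omega), hP.lt_of_rk_lt hwΦ hvΦ (by omega)⟩ ⟨?_, ?_⟩
      ⟨hub, hbv⟩ (fun e => hwb (σ.injective ((hfix w hwΦ (by omega)).trans e))) hwb
    · rw [← hfix u huΦ (by omega)]
      exact σ.lt_iff_lt.2 hub
    · rw [← hfix v hvΦ (by omega)]
      exact σ.lt_iff_lt.2 hbv
  refine hP.isIAdjacent_smul_of_apply_eq (fun x hx hxm => ?_) ?_
  · by_cases hxj : rk x = j
    · rw [hP.eq_of_rk_eq hx hbΛ (by omega), hσb]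
    · exact hfix x ((hΛ.2 x hxj).2 hx) hxm
  · rintro rfl
    exact hσ.1 (one_smul _ _).symm

theorem bijective_sumElim_smul (hP : IsAbstractPolytope α rk d) (hTwo : TwoFlagOrbits α)
    (hΦΛ : ¬ SameFlagOrbit Φ Λ) :
    Bijective (Sum.elim (· • Φ) (· • Λ) : (α ≃o α) ⊕ (α ≃o α) → Flag α) := by
  have hne : ∀ γ δ : α ≃o α, γ • Φ ≠ δ • Λ := fun γ δ h =>
    hΦΛ (sameFlagOrbit_iff_orbit_eq.2 (by rw [← orbit_smul γ Φ, h, orbit_smul]))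
  refine ⟨?_, fun Ξ => ?_⟩
  · rintro (γ | γ) (δ | δ) h <;>
      simp only [Sum.elim_inl, Sum.elim_inr, Sum.inl.injEq, Sum.inr.injEq, reduceCtorEq] at h ⊢
    · exact hP.smul_flag_injective Φ h
    · exact hne γ δ h
    · exact hne δ γ h.symm
    · exact hP.smul_flag_injective Λ h
  · rcases hTwo.mem_orbit_or_mem_orbit hΦΛ Ξ with ⟨γ, rfl⟩ | ⟨γ, rfl⟩
    · exact ⟨.inl γ, rfl⟩
    · exact ⟨.inr γ, rfl⟩

end IsAbstractPolytope

end Polytope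

/-- `γ' • Λ = Λ^{d-2}` is the paper's `γ' Φ = ((Φ^{d-1})^{d-2})^{d-1}` read at `Λ = Φ^{d-1}`. -/
structure IsDistinguishedGenerators (rk : α → ℤ) (d : ℕ) (Φ Λ : Flag α)
    (γ : ℕ → α ≃o α) (γ' : α ≃o α) : Prop where
  adj_last : IsIAdjacent rk ((d : ℤ) - 1) Φ Λ
  adj_gen : ∀ i : ℕ, i ≤ d - 2 → IsIAdjacent rk i Φ (γ i • Φ)
  adj_gen' : IsIAdjacent rk ((d : ℤ) - 2) Λ (γ' • Λ)

section DistinguishedGenerators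

variable [BoundedOrder α] {rk : α → ℤ} {d : ℕ} {Φ Λ : Flag α} {γ : ℕ → α ≃o α} {γ' : α ≃o α}

theorem IsAbstractPolytope.isDistinguishedGenerators (hP : IsAbstractPolytope α rk d)
    (hd : 1 ≤ d) {Ψ : ℕ → Flag α} (hΨ : ∀ i : ℕ, i < d → IsIAdjacent rk i Φ (Ψ i))
    {Ω₁ Ω₂ : Flag α} (hΩ₁ : IsIAdjacent rk ((d : ℤ) - 2) (Ψ (d - 1)) Ω₁)
    (hΩ₂ : IsIAdjacent rk ((d : ℤ) - 1) Ω₁ Ω₂)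
    (hγ : ∀ i : ℕ, i ≤ d - 2 → γ i '' (Φ : Set α) = (Ψ i : Set α))
    (hγ' : γ' '' (Φ : Set α) = (Ω₂ : Set α)) :
    IsDistinguishedGenerators rk d Φ (Ψ (d - 1)) γ γ' := by
  have hlast : IsIAdjacent rk ((d : ℤ) - 1) Φ (Ψ (d - 1)) := by
    simpa [Nat.cast_sub hd] using hΨ (d - 1) (by omega)
  refine ⟨hlast, fun i hi => Flag.smul_eq_iff_image_eq.2 (hγ i hi) ▸ hΨ i (by omega), ?_⟩
  have hΩ : IsIAdjacent rk ((d : ℤ) - 1) Ω₂ (γ' • Ψ (d - 1)) :=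
    Flag.smul_eq_iff_image_eq.2 hγ' ▸ hP.isIAdjacent_smul γ' hlast
  rwa [hΩ.unique hP hΩ₂.symm]

theorem IsDistinguishedGenerators.adj_gen_last (hP : IsAbstractPolytope α rk d)
    (hB : IsDistinguishedGenerators rk d Φ Λ γ γ') (i : ℕ) (hi : i < d - 2) :
    IsIAdjacent rk i Λ (γ i • Λ) :=
  hP.isIAdjacent_smul_of_two_le_abs_sub hB.adj_last (hB.adj_gen i (by omega))
    (le_abs'.2 (.inl (by omega)))

end DistinguishedGenerators

section Transfer

variable {α₁ α₂ : Type*} [PartialOrder α₁] [BoundedOrder α₁] [PartialOrder α₂]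
  [BoundedOrder α₂] {rk₁ : α₁ → ℤ} {rk₂ : α₂ → ℤ} {d : ℕ} {i : ℤ}
  {Φ₁ Λ₁ : Flag α₁} {γ₁ : ℕ → α₁ ≃o α₁} {γ₁' : α₁ ≃o α₁}
  {Φ₂ Λ₂ : Flag α₂} {γ₂ : ℕ → α₂ ≃o α₂} {γ₂' : α₂ ≃o α₂}
  {f : (α₁ ≃o α₁) → (α₂ ≃o α₂)} {T : Flag α₁ → Flag α₂}

theorem IsDistinguishedGenerators.isIAdjacent_map_of_base (hP₁ : IsAbstractPolytope α₁ rk₁ d)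
    (hP₂ : IsAbstractPolytope α₂ rk₂ d)
    (hB₁ : IsDistinguishedGenerators rk₁ d Φ₁ Λ₁ γ₁ γ₁')
    (hB₂ : IsDistinguishedGenerators rk₂ d Φ₂ Λ₂ γ₂ γ₂')
    (hf : ∀ i : ℕ, i ≤ d - 2 → f (γ₁ i) = γ₂ i) (hf' : f γ₁' = γ₂')
    (hT : ∀ γ Ξ, T (γ • Ξ) = f γ • T Ξ) (hTΦ : T Φ₁ = Φ₂) (hTΛ : T Λ₁ = Λ₂)
    {β Ξ : Flag α₁} (hβ : β = Φ₁ ∨ β = Λ₁) (h : IsIAdjacent rk₁ i β Ξ) :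
    IsIAdjacent rk₂ i (T β) (T Ξ) := by
  obtain ⟨hi0, hid⟩ := h.bounds hP₁
  rcases hβ with rfl | rfl
  · rcases eq_or_ne i (d - 1) with rfl | hi
    · rw [h.unique hP₁ hB₁.adj_last, hTΦ, hTΛ]
      exact hB₂.adj_last
    obtain ⟨m, rfl⟩ := Int.eq_ofNat_of_zero_le hi0
    have hm : m ≤ d - 2 := by omega
    rw [h.unique hP₁ (hB₁.adj_gen m hm), hT, hf m hm, hTΦ]
    exact hB₂.adj_gen m hm
  · rcases eq_or_ne i (d - 1) with rfl | hi₁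
    · rw [h.unique hP₁ hB₁.adj_last.symm, hTΦ, hTΛ]
      exact hB₂.adj_last.symm
    rcases eq_or_ne i (d - 2) with rfl | hi₂
    · rw [h.unique hP₁ hB₁.adj_gen', hT, hf', hTΛ]
      exact hB₂.adj_gen'
    obtain ⟨m, rfl⟩ := Int.eq_ofNat_of_zero_le hi0
    have hm : m < d - 2 := by omega
    rw [h.unique hP₁ (hB₁.adj_gen_last hP₁ m hm), hT, hf m hm.le, hTΛ]
    exact hB₂.adj_gen_last hP₂ m hm

theorem IsDistinguishedGenerators.isIAdjacent_map (hP₁ : IsAbstractPolytope α₁ rk₁ d)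
    (hP₂ : IsAbstractPolytope α₂ rk₂ d)
    (hB₁ : IsDistinguishedGenerators rk₁ d Φ₁ Λ₁ γ₁ γ₁')
    (hB₂ : IsDistinguishedGenerators rk₂ d Φ₂ Λ₂ γ₂ γ₂')
    (hf : ∀ i : ℕ, i ≤ d - 2 → f (γ₁ i) = γ₂ i) (hf' : f γ₁' = γ₂')
    (hT : ∀ γ Ξ, T (γ • Ξ) = f γ • T Ξ) (hTΦ : T Φ₁ = Φ₂) (hTΛ : T Λ₁ = Λ₂)
    (hcover : Surjective (Sum.elim (· • Φ₁) (· • Λ₁) : (α₁ ≃o α₁) ⊕ (α₁ ≃o α₁) → Flag α₁))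
    {Ξ Ξ' : Flag α₁} (h : IsIAdjacent rk₁ i Ξ Ξ') : IsIAdjacent rk₂ i (T Ξ) (T Ξ') := by
  suffices key : ∀ β, (β = Φ₁ ∨ β = Λ₁) → ∀ γ : α₁ ≃o α₁,
      IsIAdjacent rk₁ i (γ • β) Ξ' → IsIAdjacent rk₂ i (T (γ • β)) (T Ξ') by
    obtain ⟨γ | γ, rfl⟩ := hcover Ξ
    exacts [key _ (.inl rfl) γ h, key _ (.inr rfl) γ h]
  intro β hβ γ h
  have hβΞ' : IsIAdjacent rk₁ i β (γ⁻¹ • Ξ') := by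
    simpa using hP₁.isIAdjacent_smul γ⁻¹ h
  have := hP₂.isIAdjacent_smul (f γ)
    (hB₁.isIAdjacent_map_of_base hP₁ hP₂ hB₂ hf hf' hT hTΦ hTΛ hβ hβΞ')
  rwa [← hT, ← hT, smul_inv_smul] at this

end Transfer

theorem leftInverse_of_mem_map {α₁ α₂ : Type*} [PartialOrder α₁] [BoundedOrder α₁]
    [PartialOrder α₂] {rk₁ : α₁ → ℤ} {d : ℕ} (hP₁ : IsAbstractPolytope α₁ rk₁ d)
    {T : Flag α₁ → Flag α₂} {T' : Flag α₂ → Flag α₁} {g : α₁ → α₂} {g' : α₂ → α₁}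
    (hTT' : LeftInverse T' T) (hrk : ∀ x, rk₁ (g' (g x)) = rk₁ x) (hg : ∀ x Ξ, x ∈ Ξ → g x ∈ T Ξ)
    (hg' : ∀ y Θ, y ∈ Θ → g' y ∈ T' Θ) : LeftInverse g' g := fun x => by
  obtain ⟨Ξ, hx⟩ := Flag.exists_mem x
  exact hP₁.eq_of_rk_eq (hTT' Ξ ▸ hg' _ _ (hg x Ξ hx)) hx (hrk x)

section FlagGraphIsomorphism

variable {α₁ α₂ : Type*} [PartialOrder α₁] [BoundedOrder α₁] [PartialOrder α₂]
  [BoundedOrder α₂] {rk₁ : α₁ → ℤ} {rk₂ : α₂ → ℤ} {d : ℕ}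

theorem exists_rk_map_of_isIAdjacent_map (hP₁ : IsAbstractPolytope α₁ rk₁ d)
    (hP₂ : IsAbstractPolytope α₂ rk₂ d) {T : Flag α₁ → Flag α₂}
    (hT : ∀ i Ξ Ξ', IsIAdjacent rk₁ i Ξ Ξ' → IsIAdjacent rk₂ i (T Ξ) (T Ξ')) :
    ∃ g : α₁ → α₂, (∀ x, rk₂ (g x) = rk₁ x) ∧ ∀ x Ξ, x ∈ Ξ → g x ∈ T Ξ := by
  suffices ∀ x, ∃ y, rk₂ y = rk₁ x ∧ ∀ Ξ, x ∈ Ξ → y ∈ T Ξ by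
    choose g hg using this
    exact ⟨g, fun x => (hg x).1, fun x => (hg x).2⟩
  intro x
  obtain ⟨Ξ₀, hx₀⟩ := Flag.exists_mem x
  obtain ⟨y, ⟨hy, hyx⟩, -⟩ :=
    hP₂.flag_ranks (T Ξ₀) (rk₁ x) (hP₁.neg_one_le_rk x) (hP₁.rk_le x)
  refine ⟨y, hyx, fun Ξ hx => hP₁.flag_induction (fun Ξ => y ∈ T Ξ) hy
    fun i Ξ₁ Ξ₂ h₁ h₂ hadj hy₁ => ?_⟩
  have hxi : rk₁ x ≠ i := hadj.rk_ne hP₁ (h₁ ⟨hx₀, hx⟩) (h₂ ⟨hx₀, hx⟩)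
  exact ((hT i Ξ₁ Ξ₂ hadj).2 y (hyx ▸ hxi)).1 hy₁

theorem monotone_of_mem_map (hP₁ : IsAbstractPolytope α₁ rk₁ d)
    (hP₂ : IsAbstractPolytope α₂ rk₂ d) {T : Flag α₁ → Flag α₂} {g : α₁ → α₂}
    (hrk : ∀ x, rk₂ (g x) = rk₁ x) (hg : ∀ x Ξ, x ∈ Ξ → g x ∈ T Ξ) : Monotone g :=
  fun x y hxy => by
    obtain ⟨Ξ, hx, hy⟩ := Flag.exists_mem_mem hxy
    refine hP₂.le_of_rk_le (hg x Ξ hx) (hg y Ξ hy) ?_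
    rw [hrk, hrk]
    exact hP₁.rk_strictMono.monotone hxy

theorem nonempty_orderIso_of_flag_equiv (hP₁ : IsAbstractPolytope α₁ rk₁ d)
    (hP₂ : IsAbstractPolytope α₂ rk₂ d) (T : Flag α₁ ≃ Flag α₂)
    (hT : ∀ i Ξ Ξ', IsIAdjacent rk₁ i Ξ Ξ' → IsIAdjacent rk₂ i (T Ξ) (T Ξ'))
    (hT' : ∀ i Θ Θ', IsIAdjacent rk₂ i Θ Θ' → IsIAdjacent rk₁ i (T.symm Θ) (T.symm Θ')) :
    Nonempty (α₁ ≃o α₂) := by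
  obtain ⟨g, hrk, hg⟩ := exists_rk_map_of_isIAdjacent_map hP₁ hP₂ hT
  obtain ⟨g', hrk', hg'⟩ := exists_rk_map_of_isIAdjacent_map hP₂ hP₁ hT'
  let e : α₁ ≃ α₂ :=
    ⟨g, g', leftInverse_of_mem_map hP₁ T.symm_apply_apply (by simp [hrk, hrk']) hg hg',
      leftInverse_of_mem_map hP₂ T.apply_symm_apply (by simp [hrk, hrk']) hg' hg⟩
  exact ⟨e.toOrderIso (monotone_of_mem_map hP₁ hP₂ hrk hg)
    (monotone_of_mem_map hP₂ hP₁ hrk' hg')⟩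

end FlagGraphIsomorphism

/-- Two abstract polytopes of rank `d ≥ 2`, both in class `2_{{0,…,d-2}}`,
whose automorphism groups are isomorphic by an isomorphism matching distinguished
generators (taken with respect to base flags), are order-isomorphic. -/
theorem same_group_same_polytope {α₁ α₂ : Type*}
    [PartialOrder α₁] [BoundedOrder α₁] [PartialOrder α₂] [BoundedOrder α₂]
    (rk₁ : α₁ → ℤ) (rk₂ : α₂ → ℤ) (d : ℕ) (hd : 2 ≤ d)
    (hP₁ : IsAbstractPolytope α₁ rk₁ d) (hP₂ : IsAbstractPolytope α₂ rk₂ d)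
    (hc₁ : InClass rk₁ d (Set.Iio (d - 1))) (hc₂ : InClass rk₂ d (Set.Iio (d - 1)))
    (Φ₁ : Flag α₁) (Ψ₁ : ℕ → Flag α₁)
    (hΨ₁ : ∀ i : ℕ, i < d → IsIAdjacent rk₁ i Φ₁ (Ψ₁ i))
    (Ω₁₁ Ω₁₂ : Flag α₁)
    (hΩ₁₁ : IsIAdjacent rk₁ ((d : ℤ) - 2) (Ψ₁ (d - 1)) Ω₁₁)
    (hΩ₁₂ : IsIAdjacent rk₁ ((d : ℤ) - 1) Ω₁₁ Ω₁₂)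
    (γ₁ : ℕ → α₁ ≃o α₁)
    (hγ₁ : ∀ i : ℕ, i ≤ d - 2 → γ₁ i '' (Φ₁ : Set α₁) = (Ψ₁ i : Set α₁))
    (γ₁' : α₁ ≃o α₁) (hγ₁' : γ₁' '' (Φ₁ : Set α₁) = (Ω₁₂ : Set α₁))
    (Φ₂ : Flag α₂) (Ψ₂ : ℕ → Flag α₂)
    (hΨ₂ : ∀ i : ℕ, i < d → IsIAdjacent rk₂ i Φ₂ (Ψ₂ i))
    (Ω₂₁ Ω₂₂ : Flag α₂)
    (hΩ₂₁ : IsIAdjacent rk₂ ((d : ℤ) - 2) (Ψ₂ (d - 1)) Ω₂₁)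
    (hΩ₂₂ : IsIAdjacent rk₂ ((d : ℤ) - 1) Ω₂₁ Ω₂₂)
    (γ₂ : ℕ → α₂ ≃o α₂)
    (hγ₂ : ∀ i : ℕ, i ≤ d - 2 → γ₂ i '' (Φ₂ : Set α₂) = (Ψ₂ i : Set α₂))
    (γ₂' : α₂ ≃o α₂) (hγ₂' : γ₂' '' (Φ₂ : Set α₂) = (Ω₂₂ : Set α₂))
    (f : (α₁ ≃o α₁) ≃* (α₂ ≃o α₂))
    (hf : ∀ i : ℕ, i ≤ d - 2 → f (γ₁ i) = γ₂ i)
    (hf' : f γ₁' = γ₂') :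
    Nonempty (α₁ ≃o α₂) := by
  have hB₁ := hP₁.isDistinguishedGenerators (by omega) hΨ₁ hΩ₁₁ hΩ₁₂ hγ₁ hγ₁'
  have hB₂ := hP₂.isDistinguishedGenerators (by omega) hΨ₂ hΩ₂₁ hΩ₂₂ hγ₂ hγ₂'
  have hbij₁ := hP₁.bijective_sumElim_smul hc₁.1
    (hc₁.not_sameFlagOrbit (by omega) (by simp) (hΨ₁ (d - 1) (by omega)))
  have hbij₂ := hP₂.bijective_sumElim_smul hc₂.1
    (hc₂.not_sameFlagOrbit (by omega) (by simp) (hΨ₂ (d - 1) (by omega)))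
  obtain ⟨T, hT, hTΦ, hTΛ⟩ := exists_equivariant_equiv f hbij₁ hbij₂
  have hf_symm : ∀ i : ℕ, i ≤ d - 2 → f.symm (γ₂ i) = γ₁ i := fun i hi =>
    f.symm_apply_eq.2 (hf i hi).symm
  have hf'_symm : f.symm γ₂' = γ₁' := f.symm_apply_eq.2 hf'.symm
  exact nonempty_orderIso_of_flag_equiv hP₁ hP₂ T
    (fun i Ξ Ξ' => hB₁.isIAdjacent_map hP₁ hP₂ hB₂ hf hf' hT hTΦ hTΛ hbij₁.2)
    (fun i Θ Θ' => hB₂.isIAdjacent_map hP₂ hP₁ hB₁ hf_symm hf'_symm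
      (symm_smul_of_equivariant hT) (T.symm_apply_eq.2 hTΦ.symm) (T.symm_apply_eq.2 hTΛ.symm)
      hbij₂.2)
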